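/- arXiv:1907.02553 — 5 statements merged into one kernel-verified Lean document; each statement's English description precedes it below -/
import Mathlib

section
/- Hake's theorem for the Newton integral: for a, b ∈ ℝ ∪ {±∞} with a < b and f : (a,b) → ℝ, the Newton integral of f over (a,b) exists if and only if for every c ∈ (a,b) the Newton integral over (a,c) exists and lim_{c→b⁻} ∫ₐᶜ f exists finitely; in that case ∫ₐᵇ f = lim_{c→b⁻} ∫ₐᶜ f. -/
/-!
Restricting a primitive `F` of `f` on `(a, b)` to `(a, c)` gives the Newton integral
`F c - F(a⁺)`, which tends to `F(b⁻) - F(a⁺)` as `c → b⁻`.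

Conversely, two primitives on an interval differ by a constant, so a Newton integral is unique.
Hence if `g c` is the Newton integral over `(a, c)`, then on each `(a, c)` the function `g`
coincides with a primitive minus its limit at `a`. So `g` itself is a primitive of `f` on `(a, b)`
with limit `0` at `a⁺`, and its limit `v` at `b⁻` is the Newton integral over `(a, b)`.
-/

open Filter Set Topology

noncomputable section

/-- The open interval of reals with extended-real endpoints. -/
def eIoo (a b : EReal) : Set ℝ := {x : ℝ | a < (x : EReal) ∧ (x : EReal) < b}

/-- The filter of approach to the endpoint `c` from within the interval `(a,b)`. -/
def endFilter (c a b : EReal) : Filter ℝ :=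
  (nhds c).comap (fun x : ℝ => (x : EReal)) ⊓ Filter.principal (eIoo a b)

/-- `f` has Newton integral `v` over `(a,b)`: some primitive `F` of `f` on `(a,b)` has
finite one-sided limits `La` at `a⁺` and `Lb` at `b⁻`, and `v = Lb - La`. -/
def HasNewton (f : ℝ → ℝ) (a b : EReal) (v : ℝ) : Prop :=
  ∃ (F : ℝ → ℝ) (La Lb : ℝ),
    (∀ x ∈ eIoo a b, HasDerivAt F (f x) x) ∧
    Filter.Tendsto F (endFilter a a b) (nhds La) ∧
    Filter.Tendsto F (endFilter b a b) (nhds Lb) ∧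
    v = Lb - La

section EndFilter

variable {a b c : EReal}

theorem isOpen_eIoo (a b : EReal) : IsOpen (eIoo a b) :=
  isOpen_Ioo.preimage continuous_coe_real_ereal

theorem isPreconnected_eIoo (a b : EReal) : IsPreconnected (eIoo a b) :=
  (ordConnected_Ioo.preimage_mono EReal.coe_strictMono.monotone).isPreconnected

theorem eIoo_mono_right (h : c ≤ b) : eIoo a c ⊆ eIoo a b :=
  fun _ hx => ⟨hx.1, hx.2.trans_le h⟩

theorem eIoo_mem_endFilter (c a b : EReal) : eIoo a b ∈ endFilter c a b :=
  mem_inf_of_right (mem_principal_self _)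

theorem endFilter_coe_le_nhds (c : ℝ) (a b : EReal) : endFilter c a b ≤ 𝓝 c := by
  rw [endFilter, EReal.nhds_coe, comap_map EReal.coe_injective]
  exact inf_le_left

theorem endFilter_mono_right (h : c ≤ b) : endFilter a a c ≤ endFilter a a b :=
  inf_le_inf_left _ (principal_mono.2 (eIoo_mono_right h))

theorem endFilter_left_le (hac : a < c) : endFilter a a b ≤ endFilter a a c := by
  refine le_inf inf_le_left (le_principal_iff.2 ?_)
  filter_upwards [mem_inf_of_left (preimage_mem_comap (Iio_mem_nhds hac)),
    eIoo_mem_endFilter a a b] with x hxc hx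
  exact ⟨hx.1, hxc⟩

theorem EReal.denseRange_coe : DenseRange ((↑) : ℝ → EReal) :=
  dense_of_exists_between fun _ _ h => exists_range_iff.2 (EReal.lt_iff_exists_real_btwn.1 h)

theorem endFilter_neBot (hab : a < b) (hc : c ∈ Icc a b) : (endFilter c a b).NeBot := by
  have hcl : c ∈ closure (((↑) : ℝ → EReal) '' eIoo a b) := by
    rw [← closure_Ioo hab.ne] at hc
    exact closure_minimal (EReal.denseRange_coe.subset_closure_image_preimage_of_isOpen isOpen_Ioo)
      isClosed_closure hc
  have := comap_inf_principal_neBot_of_image_mem (mem_closure_iff_nhdsWithin_neBot.1 hcl)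
    self_mem_nhdsWithin
  exact this.mono (inf_le_inf_right _ (comap_mono nhdsWithin_le_nhds))

end EndFilter

section Newton

variable {f g F : ℝ → ℝ} {a b : EReal}

theorem HasNewton.unique (hab : a < b) {v w : ℝ} (hv : HasNewton f a b v)
    (hw : HasNewton f a b w) : v = w := by
  obtain ⟨F, La, Lb, hF, hFa, hFb, rfl⟩ := hv
  obtain ⟨G, Ma, Mb, hG, hGa, hGb, rfl⟩ := hw
  obtain ⟨K, hK⟩ := (isOpen_eIoo a b).exists_eq_add_of_deriv_eq (isPreconnected_eIoo a b)
    (fun x hx => (hF x hx).differentiableAt.differentiableWithinAt)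
    (fun x hx => (hG x hx).differentiableAt.differentiableWithinAt)
    (fun x hx => by simp only [(hF x hx).deriv, (hG x hx).deriv])
  have hlim : ∀ c ∈ Icc a b, ∀ {L M : ℝ}, Tendsto F (endFilter c a b) (𝓝 L) →
      Tendsto G (endFilter c a b) (𝓝 M) → L - M = K := by
    intro c hc L M hL hM
    have := endFilter_neBot hab hc
    refine tendsto_nhds_unique (hL.sub hM) (tendsto_const_nhds.congr' ?_)
    filter_upwards [eIoo_mem_endFilter c a b] with x hx
    rw [hK hx]; ring
  have hKa := hlim a (left_mem_Icc.2 hab.le) hFa hGa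
  have hKb := hlim b (right_mem_Icc.2 hab.le) hFb hGb
  linarith

theorem hasNewton_of_hasDerivAt_of_tendsto (hF : ∀ x ∈ eIoo a b, HasDerivAt F (f x) x) {La : ℝ}
    (hFa : Tendsto F (endFilter a a b) (𝓝 La)) {c : ℝ} (hc : c ∈ eIoo a b) :
    HasNewton f a c (F c - La) :=
  ⟨F, La, F c, fun x hx => hF x (eIoo_mono_right hc.2.le hx),
    hFa.mono_left (endFilter_mono_right hc.2.le),
    (hF c hc).continuousAt.tendsto.mono_left (endFilter_coe_le_nhds c a c), rfl⟩

theorem eqOn_sub_of_forall_hasNewton (hg : ∀ x ∈ eIoo a b, HasNewton f a x (g x))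
    (hF : ∀ x ∈ eIoo a b, HasDerivAt F (f x) x) {La : ℝ}
    (hFa : Tendsto F (endFilter a a b) (𝓝 La)) : EqOn g (fun x => F x - La) (eIoo a b) :=
  fun x hx => (hg x hx).unique hx.1 (hasNewton_of_hasDerivAt_of_tendsto hF hFa hx)

theorem hasDerivAt_of_forall_hasNewton (hg : ∀ x ∈ eIoo a b, HasNewton f a x (g x)) {w : ℝ}
    (hw : HasNewton f a b w) {x : ℝ} (hx : x ∈ eIoo a b) : HasDerivAt g (f x) x := by
  obtain ⟨F, La, -, hF, hFa, -⟩ := hw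
  refine ((hF x hx).sub_const La).congr_of_eventuallyEq ?_
  exact mem_of_superset ((isOpen_eIoo a b).mem_nhds hx) (eqOn_sub_of_forall_hasNewton hg hF hFa)

theorem tendsto_zero_of_forall_hasNewton (hg : ∀ x ∈ eIoo a b, HasNewton f a x (g x)) {w : ℝ}
    (hw : HasNewton f a b w) : Tendsto g (endFilter a a b) (𝓝 0) := by
  obtain ⟨F, La, -, hF, hFa, -⟩ := hw
  refine (sub_self La ▸ hFa.sub_const La).congr' ?_
  exact mem_of_superset (eIoo_mem_endFilter a a b) (eqOn_sub_of_forall_hasNewton hg hF hFa).symm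

end Newton

/-- Hake's theorem: the Newton integral of `f` over `(a,b)` exists with value `v` iff
the Newton integrals over `(a,c)` exist for all `c ∈ (a,b)` and tend to `v` as `c → b⁻`. -/
theorem stmt_3 (a b : EReal) (hab : a < b) (f : ℝ → ℝ) (v : ℝ) :
    HasNewton f a b v ↔
      ∃ g : ℝ → ℝ, (∀ c : ℝ, a < (c : EReal) → (c : EReal) < b →
          HasNewton f a (c : EReal) (g c)) ∧
        Filter.Tendsto g (endFilter b a b) (nhds v) := by
  constructor
  · rintro ⟨F, La, Lb, hF, hFa, hFb, rfl⟩
    exact ⟨fun c => F c - La, fun c hac hcb => hasNewton_of_hasDerivAt_of_tendsto hF hFa ⟨hac, hcb⟩,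
      hFb.sub_const La⟩
  · rintro ⟨g, hg, hgv⟩
    have hg' : ∀ x ∈ eIoo a b, HasNewton f a x (g x) := fun x hx => hg x hx.1 hx.2
    have hderiv : ∀ x ∈ eIoo a b, HasDerivAt g (f x) x := by
      intro x hx
      obtain ⟨c, hxc, hcb⟩ := EReal.lt_iff_exists_real_btwn.1 hx.2
      exact hasDerivAt_of_forall_hasNewton (fun y hy => hg' y (eIoo_mono_right hcb.le hy))
        (hg c (hx.1.trans hxc) hcb) ⟨hx.1, hxc⟩
    obtain ⟨c, hac, hcb⟩ := EReal.lt_iff_exists_real_btwn.1 hab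
    have hga : Tendsto g (endFilter a a b) (𝓝 0) :=
      (tendsto_zero_of_forall_hasNewton (fun y hy => hg' y (eIoo_mono_right hcb.le hy))
        (hg c hac hcb)).mono_left (endFilter_left_le hac)
    exact ⟨g, 0, v, hderiv, hga, hgv, (sub_zero v).symm⟩
end
end

section
/- Substitution rule for the Newton integral: suppose a,b,c,d ∈ ℝ ∪ {±∞} with a < b, c < d, g : (c,d) → (a,b) is differentiable, g(x) → a as x → c⁺, g(x) → b as x → d⁻, and the Newton integral of f over (a,b) exists. Then the Newton integral of (f∘g)·g' over (c,d) exists and equals ∫ₐᵇ f. -/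
open Filter Set Topology

noncomputable section

theorem tendsto_endFilter_of_mapsTo {g : ℝ → ℝ} {a b c d e e' : EReal}
    (hmaps : MapsTo g (eIoo c d) (eIoo a b))
    (h : Tendsto (fun x => (g x : EReal)) (endFilter e' c d) (𝓝 e)) :
    Tendsto g (endFilter e' c d) (endFilter e a b) :=
  tendsto_inf.mpr ⟨tendsto_comap_iff.mpr h,
    tendsto_principal.mpr (mem_inf_of_right (mem_principal.mpr hmaps))⟩

theorem stmt_7_general (a b c d : EReal)
    (f g g' : ℝ → ℝ) (v : ℝ)
    (hmaps : ∀ x ∈ eIoo c d, g x ∈ eIoo a b)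
    (hderiv : ∀ x ∈ eIoo c d, HasDerivAt g (g' x) x)
    (hc : Filter.Tendsto (fun x => ((g x : ℝ) : EReal)) (endFilter c c d) (nhds a))
    (hd : Filter.Tendsto (fun x => ((g x : ℝ) : EReal)) (endFilter d c d) (nhds b))
    (hf : HasNewton f a b v) :
    HasNewton (fun x => f (g x) * g' x) c d v := by
  obtain ⟨F, La, Lb, hF, hLa, hLb, hv⟩ := hf
  exact ⟨F ∘ g, La, Lb, fun x hx => (hF (g x) (hmaps x hx)).comp x (hderiv x hx),
    hLa.comp (tendsto_endFilter_of_mapsTo hmaps hc),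
    hLb.comp (tendsto_endFilter_of_mapsTo hmaps hd), hv⟩

/-- Substitution rule for the Newton integral. -/
theorem stmt_7 (a b c d : EReal) (hab : a < b) (hcd : c < d)
    (f g g' : ℝ → ℝ) (v : ℝ)
    (hmaps : ∀ x ∈ eIoo c d, g x ∈ eIoo a b)
    (hderiv : ∀ x ∈ eIoo c d, HasDerivAt g (g' x) x)
    (hc : Filter.Tendsto (fun x => ((g x : ℝ) : EReal)) (endFilter c c d) (nhds a))
    (hd : Filter.Tendsto (fun x => ((g x : ℝ) : EReal)) (endFilter d c d) (nhds b))
    (hf : HasNewton f a b v) :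
    HasNewton (fun x => f (g x) * g' x) c d v :=
  stmt_7_general a b c d f g g' v hmaps hderiv hc hd hf
end
end

section
/- For f(x,z) = x·e^{−x²(1+z²)} on (0,∞)², both iterated Newton integrals ∫₀^∞(∫₀^∞ f(x,z) dz) dx and ∫₀^∞(∫₀^∞ f(x,z) dx) dz exist and are equal. -/
/-!
All four integrals are computed in closed form. For fixed `x > 0` the `z`-integral is the
Gaussian one, `x e^{-x²} · √π / (2x) = (√π / 2) e^{-x²}`, whose `x`-integral is `π / 4`. For
fixed `z` the `x`-integrand has the primitive `-e^{-x²(1+z²)} / (2(1+z²))`, giving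
`1 / (2(1+z²))`, whose `z`-integral is `(arctan ∞ - arctan 0) / 2 = π / 4`. A continuous
function integrable on `(a, ∞)` has Newton integral equal to its Lebesgue integral, with
primitive `x ↦ ∫_a^x`, which is how the Gaussian values enter.
-/

open Filter Set Topology

noncomputable section

open Real MeasureTheory

lemma eIoo_coe_top (a : ℝ) : eIoo a ⊤ = Ioi a := by
  ext x
  simp [eIoo]

lemma endFilter_coe_coe_top (a : ℝ) : endFilter a a ⊤ = 𝓝[>] a := by
  rw [endFilter, eIoo_coe_top, ← EReal.isEmbedding_coe.nhds_eq_comap, nhdsWithin]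

lemma comap_coe_nhds_top_eq_atTop : comap ((↑) : ℝ → EReal) (𝓝 ⊤) = atTop := by
  rw [← comap_map EReal.coe_injective (f := atTop), ← EReal.nhdsWithin_top, nhdsWithin,
    comap_inf, comap_principal, preimage_compl, preimage_singleton_eq_empty.2 (by simp)]
  simp

lemma endFilter_top_coe_top (a : ℝ) : endFilter ⊤ a ⊤ = atTop := by
  rw [endFilter, eIoo_coe_top, comap_coe_nhds_top_eq_atTop, inf_eq_left, le_principal_iff]
  exact Ioi_mem_atTop a

lemma hasNewton_coe_top_of_hasDerivAt {f F : ℝ → ℝ} {a La Lb : ℝ}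
    (hF : ∀ x ∈ Ioi a, HasDerivAt F (f x) x) (ha : Tendsto F (𝓝[>] a) (𝓝 La))
    (htop : Tendsto F atTop (𝓝 Lb)) : HasNewton f a ⊤ (Lb - La) :=
  ⟨F, La, Lb, by rwa [eIoo_coe_top], by rwa [endFilter_coe_coe_top],
    by rwa [endFilter_top_coe_top], rfl⟩

lemma HasNewton.const_mul {f : ℝ → ℝ} {a b : EReal} {v : ℝ} (c : ℝ) (h : HasNewton f a b v) :
    HasNewton (fun x => c * f x) a b (c * v) := by
  obtain ⟨F, La, Lb, hF, ha, hb, rfl⟩ := h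
  exact ⟨fun x => c * F x, c * La, c * Lb, fun x hx => (hF x hx).const_mul c,
    ha.const_mul c, hb.const_mul c, mul_sub c Lb La⟩

lemma hasNewton_coe_top_of_integrableOn {f : ℝ → ℝ} {a : ℝ} (hc : Continuous f)
    (hi : IntegrableOn f (Ioi a)) : HasNewton f a ⊤ (∫ x in Ioi a, f x) := by
  have hF (x : ℝ) : HasDerivAt (fun z => ∫ t in a..z, f t) (f x) x :=
    (hc.integral_hasStrictDerivAt a x).hasDerivAt
  have ha : Tendsto (fun z => ∫ t in a..z, f t) (𝓝[>] a) (𝓝 0) := by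
    simpa using ((hF a).continuousAt.tendsto).mono_left nhdsWithin_le_nhds
  simpa using hasNewton_coe_top_of_hasDerivAt (fun x _ => hF x) ha
    (intervalIntegral_tendsto_integral_Ioi a hi tendsto_id)

lemma hasNewton_exp_neg_mul_sq {b : ℝ} (hb : 0 < b) :
    HasNewton (fun x => exp (-b * x ^ 2)) (0 : ℝ) ⊤ (√(π / b) / 2) := by
  rw [← integral_gaussian_Ioi]
  exact hasNewton_coe_top_of_integrableOn (by fun_prop)
    (integrable_exp_neg_mul_sq hb).integrableOn

lemma hasNewton_mul_exp_neg_sq_mul {c : ℝ} (hc : 0 < c) :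
    HasNewton (fun x => x * exp (-(x ^ 2) * c)) (0 : ℝ) ⊤ (1 / (2 * c)) := by
  set F : ℝ → ℝ := fun x => -exp (-(x ^ 2) * c) / (2 * c)
  have hF (x : ℝ) : HasDerivAt F (x * exp (-(x ^ 2) * c)) x := by
    have hq : HasDerivAt (fun x : ℝ => -(x ^ 2) * c) (-(2 * x) * c) x := by
      simpa using ((hasDerivAt_pow 2 x).neg).mul_const c
    refine (hq.exp.neg.div_const (2 * c)).congr_deriv ?_
    field_simp
  have ha : Tendsto F (𝓝[>] 0) (𝓝 (-1 / (2 * c))) := by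
    simpa [F] using ((hF 0).continuousAt.tendsto).mono_left nhdsWithin_le_nhds
  have hexp : Tendsto (fun x : ℝ => exp (-(x ^ 2) * c)) atTop (𝓝 0) :=
    tendsto_exp_atBot.comp <| (tendsto_neg_atTop_atBot.comp
      (tendsto_pow_atTop two_ne_zero)).atBot_mul_const hc
  have htop : Tendsto F atTop (𝓝 0) := by
    simpa [F] using hexp.neg.div_const (2 * c)
  convert hasNewton_coe_top_of_hasDerivAt (fun x _ => hF x) ha htop using 1
  ring

lemma hasNewton_one_div_one_add_sq :
    HasNewton (fun z => 1 / (1 + z ^ 2)) (0 : ℝ) ⊤ (π / 2) := by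
  have ha : Tendsto arctan (𝓝[>] 0) (𝓝 0) := by
    simpa using continuous_arctan.continuousAt.tendsto.mono_left (nhdsWithin_le_nhds (a := 0))
  simpa using hasNewton_coe_top_of_hasDerivAt (fun x _ => hasDerivAt_arctan x) ha
    (tendsto_arctan_atTop.mono_right nhdsWithin_le_nhds)

/-- Both iterated Newton integrals of `x * exp (-x^2 * (1+z^2))` over `(0,∞)²` exist and
are equal. -/
theorem stmt_9 :
    ∃ (I J : ℝ → ℝ) (v : ℝ),
      (∀ x : ℝ, 0 < x →
        HasNewton (fun z => x * Real.exp (-(x ^ 2) * (1 + z ^ 2))) ((0 : ℝ) : EReal) ⊤ (I x)) ∧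
      HasNewton I ((0 : ℝ) : EReal) ⊤ v ∧
      (∀ z : ℝ, 0 < z →
        HasNewton (fun x => x * Real.exp (-(x ^ 2) * (1 + z ^ 2))) ((0 : ℝ) : EReal) ⊤ (J z)) ∧
      HasNewton J ((0 : ℝ) : EReal) ⊤ v := by
  refine ⟨fun x => √π / 2 * exp (-1 * x ^ 2), fun z => 1 / (2 * (1 + z ^ 2)), π / 4,
    fun x hx => ?_, ?_, fun z _ => hasNewton_mul_exp_neg_sq_mul (by positivity), ?_⟩
  · convert (hasNewton_exp_neg_mul_sq (pow_pos hx 2)).const_mul (x * exp (-(x ^ 2))) using 1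
    · ext z
      rw [mul_assoc, ← exp_add]
      ring_nf
    · rw [sqrt_div pi_pos.le, sqrt_sq hx.le]
      field_simp
  · convert (hasNewton_exp_neg_mul_sq one_pos).const_mul (√π / 2) using 1
    rw [div_one, div_mul_div_comm, mul_self_sqrt pi_pos.le]
    ring
  · convert hasNewton_one_div_one_add_sq.const_mul (1 / 2) using 1
    · ext z
      field_simp
    · ring
end
end

section
/- There exist real constants c and C such that for all n ∈ ℕ, |log(n!) − c − ∫_{1/2}^{n+1/2} log x dx| ≤ C/n, where ∫_{1/2}^{n+1/2} log x dx = (x log x − x)(n+1/2) − (x log x − x)(1/2). -/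
/-!
On `[m - 1/2, m + 1/2]` the midpoint rule for `∫ log` has error `O(1/m²)`: writing
`m ± 1/2 = m (1 ± t)` with `t = 1/(2m)` and expanding `log (1 ± t)` to third order, the error
is `t²/6 + O(t³) ≤ 2t²`. Hence `a n = log n! - ∫_{1/2}^{n+1/2} log` has increments bounded by
`1/(2(n+1)²) ≤ 1/(2n) - 1/(2(n+1))`, so `a n ± 1/(2n)` squeeze a limit `c` with
`|a n - c| ≤ 1/(2n)`.
-/

open Filter Set Topology

noncomputable section

open Real

theorem exists_abs_sub_le_of_abs_sub_succ_le {u b : ℕ → ℝ} (hb : ∀ k, 0 ≤ b k)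
    (h : ∀ k, |u (k + 1) - u k| ≤ b k - b (k + 1)) : ∃ c, ∀ n, |u n - c| ≤ b n := by
  have hlow : Monotone (u - b) := monotone_nat_of_le_succ fun k => by
    have := (abs_le.mp (h k)).1
    simp only [Pi.sub_apply]
    linarith
  have hup : Antitone (u + b) := antitone_nat_of_succ_le fun k => by
    have := (abs_le.mp (h k)).2
    simp only [Pi.add_apply]
    linarith
  have hsep (k n : ℕ) : u k - b k ≤ u n + b n :=
    calc u k - b k ≤ u (max k n) - b (max k n) := hlow (le_max_left k n)
      _ ≤ u (max k n) + b (max k n) := by linarith [hb (max k n)]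
      _ ≤ u n + b n := hup (le_max_right k n)
  refine ⟨⨆ k, (u k - b k), fun n => abs_sub_le_iff.mpr ⟨?_, ?_⟩⟩
  · have := le_ciSup ⟨u 0 + b 0, forall_mem_range.2 fun k => hsep k 0⟩ n
    linarith
  · have := ciSup_le fun k => hsep k n
    linarith

theorem abs_log_one_add_sub_cubic_le {t : ℝ} (ht : |t| ≤ 1 / 2) :
    |log (1 + t) - (t - t ^ 2 / 2 + t ^ 3 / 3)| ≤ 2 * t ^ 4 := by
  have h := abs_log_sub_add_sum_range_le (x := -t) (by rw [abs_neg]; linarith) 3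
  norm_num [Finset.sum_range_succ] at h
  calc |log (1 + t) - (t - t ^ 2 / 2 + t ^ 3 / 3)|
      = |-t + t ^ 2 / 2 + (-t) ^ 3 / 3 + log (1 + t)| := by ring_nf
    _ ≤ |t| ^ 4 / (1 - |t|) := h
    _ ≤ 2 * t ^ 4 := by
      rw [div_le_iff₀ (by linarith), pow_abs, abs_of_nonneg (by positivity)]
      nlinarith [mul_le_mul_of_nonneg_left ht (by positivity : (0 : ℝ) ≤ t ^ 4)]

def logAntideriv (x : ℝ) : ℝ := x * log x - x

theorem abs_log_sub_logAntideriv_sub_le {m : ℝ} (hm : 1 ≤ m) :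
    |log m - (logAntideriv (m + 1 / 2) - logAntideriv (m - 1 / 2))| ≤ 1 / (2 * m ^ 2) := by
  set t := 1 / (2 * m) with ht_def
  have hm0 : 0 < m := by linarith
  have hmt : 2 * m * t = 1 := by rw [ht_def]; field_simp
  have ht0 : 0 < t := by positivity
  have ht_le : t ≤ 1 / 2 := by
    rw [ht_def, div_le_div_iff₀ (by positivity) (by norm_num)]
    linarith
  have ht : |t| ≤ 1 / 2 := by rwa [abs_of_pos ht0]
  obtain ⟨e₁, he₁, hlog₁⟩ : ∃ e, |e| ≤ 2 * t ^ 4 ∧ log (1 + t) = t - t ^ 2 / 2 + t ^ 3 / 3 + e :=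
    ⟨_, abs_log_one_add_sub_cubic_le ht, by ring⟩
  obtain ⟨e₂, he₂, hlog₂⟩ :
      ∃ e, |e| ≤ 2 * t ^ 4 ∧ log (1 + -t) = -t - t ^ 2 / 2 - t ^ 3 / 3 + e :=
    ⟨log (1 + -t) - (-t - t ^ 2 / 2 - t ^ 3 / 3), by
      convert abs_log_one_add_sub_cubic_le (t := -t) (by rwa [abs_neg]) using 2 <;> ring, by ring⟩
  have hplus : m + 1 / 2 = m * (1 + t) := by linear_combination -hmt / 2
  have hminus : m - 1 / 2 = m * (1 + -t) := by linear_combination hmt / 2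
  have key : log m - (logAntideriv (m + 1 / 2) - logAntideriv (m - 1 / 2))
      = t ^ 2 / 6 - m * (1 + t) * e₁ + m * (1 + -t) * e₂ := by
    rw [logAntideriv, logAntideriv, hplus, hminus, log_mul hm0.ne' (by linarith),
      log_mul hm0.ne' (by linarith), hlog₁, hlog₂]
    linear_combination (t ^ 2 / 6 - log m) * hmt
  have hcube : 4 * m * t ^ 4 ≤ t ^ 2 := by
    nlinarith [mul_le_mul_of_nonneg_left ht_le (sq_nonneg t)]
  have hplus0 : 0 ≤ m * (1 + t) := by positivity
  have hminus0 : 0 ≤ m * (1 + -t) := mul_nonneg hm0.le (by linarith)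
  have h₁ := abs_le.mp he₁
  have h₂ := abs_le.mp he₂
  have hsq : 2 * t ^ 2 = 1 / (2 * m ^ 2) := by rw [ht_def]; field_simp
  rw [key, ← hsq, abs_le]
  constructor <;> linarith [mul_le_mul_of_nonneg_left h₁.1 hplus0,
    mul_le_mul_of_nonneg_left h₁.2 hplus0, mul_le_mul_of_nonneg_left h₂.1 hminus0,
    mul_le_mul_of_nonneg_left h₂.2 hminus0]

def logFactorialSubIntegral (n : ℕ) : ℝ :=
  log (n.factorial : ℝ) - (logAntideriv (n + 1 / 2) - logAntideriv (1 / 2))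

theorem abs_logFactorialSubIntegral_succ_sub_le (k : ℕ) :
    |logFactorialSubIntegral (k + 1) - logFactorialSubIntegral k| ≤
      1 / (2 * ((k : ℝ) + 1) ^ 2) := by
  have hk : (1 : ℝ) ≤ k + 1 := by linarith [k.cast_nonneg (α := ℝ)]
  convert abs_log_sub_logAntideriv_sub_le hk using 2
  rw [logFactorialSubIntegral, logFactorialSubIntegral, Nat.factorial_succ, Nat.cast_mul,
    log_mul (by positivity) (by positivity)]
  push_cast
  ring_nf

theorem one_div_two_mul_add_one_sq_le {x : ℝ} (hx : 0 < x) :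
    1 / (2 * (x + 1) ^ 2) ≤ 1 / (2 * x) - 1 / (2 * (x + 1)) := by
  rw [div_sub_div _ _ (by positivity) (by positivity),
    div_le_div_iff₀ (by positivity) (by positivity)]
  nlinarith

/-- First expression of `n!` by an integral:
`log (n!) = c + O(1/n) + (integral of log from 1/2 to n + 1/2)`, the integral computed
by the primitive `x * log x - x`. -/
theorem stmt_14 :
    ∃ c C : ℝ, ∀ n : ℕ, 1 ≤ n →
      |Real.log (Nat.factorial n : ℝ) - c -
        ((((n : ℝ) + 1 / 2) * Real.log ((n : ℝ) + 1 / 2) - ((n : ℝ) + 1 / 2)) -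
         ((1 / 2 : ℝ) * Real.log (1 / 2 : ℝ) - (1 / 2 : ℝ)))| ≤ C / (n : ℝ) := by
  obtain ⟨c, hc⟩ := exists_abs_sub_le_of_abs_sub_succ_le
    (u := fun k => logFactorialSubIntegral (k + 1)) (b := fun k => 1 / (2 * ((k : ℝ) + 1)))
    (fun k => by positivity) fun k => by
      have h := abs_logFactorialSubIntegral_succ_sub_le (k + 1)
      push_cast at h ⊢
      exact h.trans (one_div_two_mul_add_one_sq_le (by positivity))
  refine ⟨c, 1 / 2, fun n hn => ?_⟩
  obtain ⟨k, rfl⟩ := Nat.exists_eq_add_of_le' hn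
  convert hc k using 1
  · rw [logFactorialSubIntegral, logAntideriv, logAntideriv]
    ring_nf
  · push_cast
    rw [div_div]
end
end

section
/- The Gauss integral via the Newton integral: ∫_{−∞}^{+∞} e^{−t²} dt = √π, where the integral is the Newton integral, i.e., e^{−t²} has a primitive F on ℝ with finite limits at ±∞ and F(+∞) − F(−∞) = √π. -/
/-
The Gaussian is continuous and Lebesgue integrable, so `x ↦ ∫₀ˣ e^{-t²} dt` is a primitive
on `ℝ` whose limits at `-∞` and `+∞` are `-∫_{(-∞,0]}` and `∫_{(0,∞)}`. Their difference is
the Lebesgue integral over `ℝ`, which equals `√π` by Mathlib's Fubini computation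
`integral_gaussian`.
-/

open Filter Set Topology MeasureTheory

noncomputable section

namespace EReal

lemma comap_coe_nhds_top : comap ((↑) : ℝ → EReal) (𝓝 ⊤) = atTop :=
  (nhds_top_basis.comap _).ext atTop_basis_Ioi
    (fun a _ => ⟨a, trivial, fun x hx => by simpa using hx⟩)
    fun a _ => ⟨a, trivial, fun x hx => by simpa using hx⟩

lemma comap_coe_nhds_bot : comap ((↑) : ℝ → EReal) (𝓝 ⊥) = atBot :=
  (nhds_bot_basis.comap _).ext atBot_basis_Iio
    (fun a _ => ⟨a, trivial, fun x hx => by simpa using hx⟩)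
    fun a _ => ⟨a, trivial, fun x hx => by simpa using hx⟩

end EReal

lemma eIoo_bot_top : eIoo ⊥ ⊤ = univ := by
  ext x
  simp [eIoo]

lemma endFilter_bot_bot_top : endFilter ⊥ ⊥ ⊤ = atBot := by
  rw [endFilter, eIoo_bot_top, EReal.comap_coe_nhds_bot, principal_univ, inf_top_eq]

lemma endFilter_top_bot_top : endFilter ⊤ ⊥ ⊤ = atTop := by
  rw [endFilter, eIoo_bot_top, EReal.comap_coe_nhds_top, principal_univ, inf_top_eq]

theorem hasNewton_bot_top_integral {f : ℝ → ℝ} (hf : Continuous f) (hfi : Integrable f) :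
    HasNewton f ⊥ ⊤ (∫ t, f t) := by
  refine ⟨fun x => ∫ t in (0 : ℝ)..x, f t, -∫ t in Iic 0, f t, ∫ t in Ioi 0, f t,
    fun x _ => hf.integral_hasStrictDerivAt 0 x |>.hasDerivAt, ?_, ?_, ?_⟩
  · rw [endFilter_bot_bot_top]
    refine (intervalIntegral_tendsto_integral_Iic 0 hfi.integrableOn tendsto_id).neg.congr
      fun x => ?_
    rw [intervalIntegral.integral_symm, neg_neg]
    rfl
  · rw [endFilter_top_bot_top]
    exact intervalIntegral_tendsto_integral_Ioi 0 hfi.integrableOn tendsto_id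
  · rw [sub_neg_eq_add, add_comm,
      intervalIntegral.integral_Iic_add_Ioi hfi.integrableOn hfi.integrableOn]

/-- The Gauss integral via the Newton integral: the Newton integral of `exp (-t^2)`
over `(-∞, +∞)` exists and equals `sqrt π`. -/
theorem stmt_18 :
    HasNewton (fun t => Real.exp (-(t ^ 2))) ⊥ ⊤ (Real.sqrt Real.pi) := by
  have hgauss : ∫ t : ℝ, Real.exp (-(t ^ 2)) = Real.sqrt Real.pi := by
    simpa using integral_gaussian 1
  rw [← hgauss]
  exact hasNewton_bot_top_integral (by fun_prop) (by simpa using integrable_exp_neg_mul_sq one_pos)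
end
end
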